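/- Fix positive reals ν_a, ν_o, h_a, h_o, α_c, ε and θ ∈ ℝ with 0 < θ ≤ 1, and assume √(ν_o/ν_a) ≤ h_o/h_a. For real t ≠ 0 define χ_j(t) = i·t·h_j²/ν_j, λ_j(t) = (χ_j(t) − √(χ_j(t))·√(χ_j(t)+4))/2 (principal complex square root, j ∈ {a,o}), and the convergence factor ξ(t) = |((1−θ) + ε·h_a·λ_o(t)/(h_o·λ_a(t))) / (ν_a·χ_a(t)/(α_c·h_a·λ_a(t)) − θ)|. Then for every real t ≠ 0, ξ(t) ≤ ξ₀ where ξ₀ = (1/θ)·|1 − θ + ε·√(ν_a/ν_o)| is the low-frequency limit of ξ. -/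

import Mathlib

open Filter Topology

/-- Principal complex square root. -/
noncomputable def csqrt (z : ℂ) : ℂ := z ^ ((1 : ℂ) / 2)

/-- `λ(χ) = (χ − √χ·√(χ+4))/2`. -/
noncomputable def lamM (χ : ℂ) : ℂ := (χ - csqrt χ * csqrt (χ + 4)) / 2

/-- `χ_j(t) = i·t·h_j²/ν_j`. -/
noncomputable def chi (h ν t : ℝ) : ℂ := Complex.I * t * (h : ℂ) ^ 2 / (ν : ℂ)

/-- The SWR convergence factor with linear friction
`ξ(t) = |((1−θ) + ε·h_a·λ_o/(h_o·λ_a)) / (ν_a·χ_a/(α_c·h_a·λ_a) − θ)|`. -/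
noncomputable def xi (νa νo ha ho αc ε θ : ℝ) (t : ℝ) : ℝ :=
  norm (((1 - (θ : ℂ)) + (ε : ℂ) * (ha : ℂ) * lamM (chi ho νo t)
      / ((ho : ℂ) * lamM (chi ha νa t)))
    / ((νa : ℂ) * chi ha νa t / ((αc : ℂ) * (ha : ℂ) * lamM (chi ha νa t)) - (θ : ℂ)))


open Complex


lemma csqrt_mul_self {z : ℂ} (hz : z ≠ 0) : csqrt z * csqrt z = z := by
  unfold csqrt
  rw [← Complex.cpow_add _ _ hz]
  norm_num

lemma csqrt_re_nonneg (z : ℂ) : 0 ≤ (csqrt z).re := by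
  unfold csqrt
  rcases eq_or_ne z 0 with rfl | hz
  · rw [Complex.zero_cpow (by norm_num)]; simp
  · rw [Complex.cpow_def_of_ne_zero hz, Complex.exp_re]
    apply mul_nonneg (Real.exp_nonneg _)
    apply Real.cos_nonneg_of_mem_Icc
    have h1 := Complex.neg_pi_lt_arg z
    have h2 := Complex.arg_le_pi z
    have : (Complex.log z * (1/2)).im = Complex.arg z / 2 := by
      simp [Complex.mul_im, Complex.log_im]
      ring
    rw [this]
    constructor <;> [linarith [Real.pi_pos]; linarith]

lemma csqrt_unique {w : ℂ} (hw : 0 < w.re) : csqrt (w * w) = w := by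
  have hwne : w ≠ 0 := fun h => by simp [h] at hw
  have hz : w * w ≠ 0 := mul_ne_zero hwne hwne
  have h := csqrt_mul_self hz
  have hfac : (csqrt (w * w) - w) * (csqrt (w * w) + w) = 0 := by
    linear_combination h
  rcases mul_eq_zero.mp hfac with h' | h'
  · exact sub_eq_zero.mp h'
  · exfalso
    have he : csqrt (w * w) = -w := by linear_combination h'
    have hge := csqrt_re_nonneg (w * w)
    rw [he] at hge
    simp at hge
    linarith

noncomputable def aa (u : ℝ) : ℝ := Real.sqrt (u / 2)
noncomputable def RR (u : ℝ) : ℝ := Real.sqrt (u ^ 2 + 16)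
noncomputable def xx (u : ℝ) : ℝ := Real.sqrt ((RR u + 4) / 2)
noncomputable def yy (u : ℝ) : ℝ := Real.sqrt ((RR u - 4) / 2)
noncomputable def F2 (u : ℝ) : ℝ := (aa u + xx u) ^ 2 + (aa u + yy u) ^ 2

lemma RR_ge_four (u : ℝ) : 4 ≤ RR u := by
  have : (4:ℝ) = Real.sqrt 16 := by
    rw [show (16:ℝ) = 4^2 by norm_num, Real.sqrt_sq (by norm_num)]
  rw [this]
  exact Real.sqrt_le_sqrt (by nlinarith [sq_nonneg u])

lemma aa_nonneg (u : ℝ) : 0 ≤ aa u := Real.sqrt_nonneg _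
lemma xx_nonneg (u : ℝ) : 0 ≤ xx u := Real.sqrt_nonneg _
lemma yy_nonneg (u : ℝ) : 0 ≤ yy u := Real.sqrt_nonneg _

lemma xx_pos (u : ℝ) : 0 < xx u := by
  apply Real.sqrt_pos.mpr
  have := RR_ge_four u
  linarith

lemma aa_sq {u : ℝ} (hu : 0 ≤ u) : aa u ^ 2 = u / 2 :=
  Real.sq_sqrt (by linarith)

lemma xx_sq (u : ℝ) : xx u ^ 2 = (RR u + 4) / 2 :=
  Real.sq_sqrt (by have := RR_ge_four u; linarith)

lemma yy_sq (u : ℝ) : yy u ^ 2 = (RR u - 4) / 2 :=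
  Real.sq_sqrt (by have := RR_ge_four u; linarith)

lemma yy_le_xx (u : ℝ) : yy u ≤ xx u :=
  Real.sqrt_le_sqrt (by linarith)

lemma two_xx_yy {u : ℝ} (hu : 0 ≤ u) : 2 * xx u * yy u = u := by
  unfold xx yy
  rw [mul_assoc, ← Real.sqrt_mul (by have := RR_ge_four u; linarith)]
  have hR : RR u ^ 2 = u ^ 2 + 16 := Real.sq_sqrt (by positivity)
  have : (RR u + 4) / 2 * ((RR u - 4) / 2) = (u/2) ^ 2 := by nlinarith
  rw [this, Real.sqrt_sq (by linarith)]
  ring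

lemma F2_pos (u : ℝ) : 0 < F2 u := by
  have h1 := aa_nonneg u
  have h2 := xx_pos u
  have h3 := yy_nonneg u
  unfold F2
  positivity

lemma F2_mono {u v : ℝ} (hu : 0 ≤ u) (huv : u ≤ v) : F2 u ≤ F2 v := by
  have hR : RR u ≤ RR v := Real.sqrt_le_sqrt (by nlinarith)
  have ha : aa u ≤ aa v := Real.sqrt_le_sqrt (by linarith)
  have hx : xx u ≤ xx v := Real.sqrt_le_sqrt (by linarith)
  have hy : yy u ≤ yy v := Real.sqrt_le_sqrt (by linarith)
  have := aa_nonneg u; have := xx_nonneg u; have := yy_nonneg u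
  unfold F2
  gcongr <;> linarith

lemma csqrt_I_pos {s : ℝ} (hs : 0 < s) :
    csqrt (Complex.I * s) = (aa s : ℂ) * (1 + Complex.I) := by
  have ha2 : ((aa s : ℝ) : ℂ) ^ 2 = ((s/2 : ℝ) : ℂ) := by
    rw [← Complex.ofReal_pow, aa_sq hs.le]
  have hapos : 0 < aa s := Real.sqrt_pos.mpr (by linarith)
  have := csqrt_unique (w := (aa s : ℂ) * (1 + Complex.I)) (by simp [hapos])
  rw [← this]
  congr 1
  have : ((aa s : ℂ) * (1 + Complex.I)) * ((aa s : ℂ) * (1 + Complex.I))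
      = ((aa s:ℂ))^2 * (2 * Complex.I) := by ring_nf; rw [Complex.I_sq]; ring
  rw [this, ha2]
  push_cast
  ring

lemma csqrt_I_neg {s : ℝ} (hs : s < 0) :
    csqrt (Complex.I * s) = (aa (-s) : ℂ) * (1 - Complex.I) := by
  have ha2 : ((aa (-s) : ℝ) : ℂ) ^ 2 = ((-s/2 : ℝ) : ℂ) := by
    rw [← Complex.ofReal_pow, aa_sq (by linarith)]
  have hapos : 0 < aa (-s) := Real.sqrt_pos.mpr (by linarith)
  have := csqrt_unique (w := (aa (-s) : ℂ) * (1 - Complex.I)) (by simp [hapos])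
  rw [← this]
  congr 1
  have : ((aa (-s) : ℂ) * (1 - Complex.I)) * ((aa (-s) : ℂ) * (1 - Complex.I))
      = ((aa (-s):ℂ))^2 * (-2 * Complex.I) := by ring_nf; rw [Complex.I_sq]; ring
  rw [this, ha2]
  push_cast
  ring

lemma csqrt_four_add_I_pos {s : ℝ} (hs : 0 < s) :
    csqrt (Complex.I * s + 4) = (xx s : ℂ) + (yy s : ℂ) * Complex.I := by
  have hxy : 2 * xx s * yy s = s := two_xx_yy hs.le
  have hx2 : xx s ^ 2 = (RR s + 4)/2 := xx_sq s
  have hy2 : yy s ^ 2 = (RR s - 4)/2 := yy_sq s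
  have := csqrt_unique (w := (xx s : ℂ) + (yy s : ℂ) * Complex.I)
    (by simp [xx_pos s])
  rw [← this]
  congr 1
  have hexp : ((xx s : ℂ) + (yy s : ℂ) * Complex.I) * ((xx s : ℂ) + (yy s : ℂ) * Complex.I)
      = (((xx s ^ 2 - yy s ^ 2 : ℝ)) : ℂ) + ((2 * xx s * yy s : ℝ) : ℂ) * Complex.I := by
    push_cast
    ring_nf
    rw [Complex.I_sq]
    ring
  rw [hexp, hxy, hx2, hy2]
  push_cast
  ring

lemma csqrt_four_add_I_neg {s : ℝ} (hs : s < 0) :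
    csqrt (Complex.I * s + 4) = (xx (-s) : ℂ) - (yy (-s) : ℂ) * Complex.I := by
  have hxy : 2 * xx (-s) * yy (-s) = -s := two_xx_yy (by linarith)
  have hx2 : xx (-s) ^ 2 = (RR (-s) + 4)/2 := xx_sq (-s)
  have hy2 : yy (-s) ^ 2 = (RR (-s) - 4)/2 := yy_sq (-s)
  have := csqrt_unique (w := (xx (-s) : ℂ) - (yy (-s) : ℂ) * Complex.I)
    (by simp [xx_pos (-s)])
  rw [← this]
  congr 1
  have hexp : ((xx (-s) : ℂ) - (yy (-s) : ℂ) * Complex.I) * ((xx (-s) : ℂ) - (yy (-s) : ℂ) * Complex.I)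
      = (((xx (-s) ^ 2 - yy (-s) ^ 2 : ℝ)) : ℂ) - ((2 * xx (-s) * yy (-s) : ℝ) : ℂ) * Complex.I := by
    push_cast
    ring_nf
    rw [Complex.I_sq]
    ring
  rw [hexp, hxy, hx2, hy2]
  push_cast
  ring

lemma I_mul_s_ne_zero {s : ℝ} (hs : s ≠ 0) : Complex.I * (s : ℂ) ≠ 0 := by
  simp [Complex.I_ne_zero, hs]

lemma I_mul_s_add_four_ne_zero (s : ℝ) : Complex.I * (s : ℂ) + 4 ≠ 0 := by
  intro h
  have := congrArg Complex.re h
  simp [Complex.add_re, Complex.mul_re] at this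

lemma S_ne_zero {s : ℝ} (hs : s ≠ 0) :
    csqrt (Complex.I * s) + csqrt (Complex.I * s + 4) ≠ 0 := by
  intro h
  have hp := csqrt_mul_self (I_mul_s_ne_zero hs)
  have hq := csqrt_mul_self (I_mul_s_add_four_ne_zero s)
  have he : csqrt (Complex.I * s) = - csqrt (Complex.I * s + 4) := by
    linear_combination h
  rw [he] at hp
  have : (Complex.I * s : ℂ) = Complex.I * s + 4 := by linear_combination -hp + hq
  simp at this

lemma lamM_eq {s : ℝ} (hs : s ≠ 0) :
    lamM (Complex.I * s) = -2 * csqrt (Complex.I * s)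
      / (csqrt (Complex.I * s) + csqrt (Complex.I * s + 4)) := by
  have hp := csqrt_mul_self (I_mul_s_ne_zero hs)
  have hq := csqrt_mul_self (I_mul_s_add_four_ne_zero s)
  have hS := S_ne_zero hs
  unfold lamM
  field_simp
  linear_combination (-(csqrt (Complex.I * (s:ℂ) + 4))) * hp + (-(csqrt (Complex.I * (s:ℂ)))) * hq

lemma abs_csqrt_I {s : ℝ} (hs : s ≠ 0) :
    ‖csqrt (Complex.I * s)‖ = Real.sqrt |s| := by
  have hp := csqrt_mul_self (I_mul_s_ne_zero hs)
  have h2 : ‖csqrt (Complex.I * s)‖ ^ 2 = |s| := by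
    rw [sq, ← norm_mul, hp]
    simp
  rw [← h2, Real.sqrt_sq (norm_nonneg _)]

lemma abs_S {s : ℝ} (hs : s ≠ 0) :
    ‖csqrt (Complex.I * s) + csqrt (Complex.I * s + 4)‖
      = Real.sqrt (F2 |s|) := by
  rcases hs.lt_or_gt with h | h
  · rw [csqrt_I_neg h, csqrt_four_add_I_neg h, abs_of_neg h]
    have he : (aa (-s) : ℂ) * (1 - Complex.I) + ((xx (-s) : ℂ) - (yy (-s) : ℂ) * Complex.I)
        = ((aa (-s) + xx (-s) : ℝ) : ℂ) + ((-(aa (-s) + yy (-s)) : ℝ) : ℂ) * Complex.I := by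
      push_cast; ring
    rw [he, Complex.norm_add_mul_I]
    unfold F2
    ring_nf
  · rw [csqrt_I_pos h, csqrt_four_add_I_pos h, abs_of_pos h]
    have he : (aa s : ℂ) * (1 + Complex.I) + ((xx s : ℂ) + (yy s : ℂ) * Complex.I)
        = ((aa s + xx s : ℝ) : ℂ) + ((aa s + yy s : ℝ) : ℂ) * Complex.I := by
      push_cast; ring
    rw [he, Complex.norm_add_mul_I]
    unfold F2
    ring_nf

lemma abs_lamM {s : ℝ} (hs : s ≠ 0) :
    ‖lamM (Complex.I * s)‖ = 2 * Real.sqrt |s| / Real.sqrt (F2 |s|) := by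
  rw [lamM_eq hs, norm_div, norm_mul, abs_S hs, abs_csqrt_I hs]
  norm_num

lemma lamM_ne_zero {s : ℝ} (hs : s ≠ 0) : lamM (Complex.I * s) ≠ 0 := by
  intro h
  have habs := abs_lamM hs
  rw [h, norm_zero] at habs
  have h1 : 0 < Real.sqrt |s| := Real.sqrt_pos.mpr (abs_pos.mpr hs)
  have h2 : 0 < Real.sqrt (F2 |s|) := Real.sqrt_pos.mpr (F2_pos _)
  have : (0:ℝ) < 2 * Real.sqrt |s| / Real.sqrt (F2 |s|) := by positivity
  linarith

lemma re_chi_div_lam {s : ℝ} (hs : s ≠ 0) :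
    ((Complex.I * s) / lamM (Complex.I * s)).re ≤ 0 := by
  have hp := csqrt_mul_self (I_mul_s_ne_zero hs)
  have hS := S_ne_zero hs
  have hpne : csqrt (Complex.I * s) ≠ 0 := by
    intro h; rw [h] at hp; simp at hp
    exact hs hp
  have hkey : (Complex.I * s) / lamM (Complex.I * s)
      = -(csqrt (Complex.I * s)
          * (csqrt (Complex.I * s) + csqrt (Complex.I * s + 4))) / 2 := by
    rw [div_eq_iff (lamM_ne_zero hs), lamM_eq hs]
    have hmul : -(csqrt (Complex.I * s) * (csqrt (Complex.I * s) + csqrt (Complex.I * s + 4))) / 2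
        * (-2 * csqrt (Complex.I * s) / (csqrt (Complex.I * s) + csqrt (Complex.I * s + 4)))
        = csqrt (Complex.I * s) * csqrt (Complex.I * s) := by
      field_simp
    rw [hmul, hp]
  rw [hkey]
  rcases hs.lt_or_gt with h | h
  · rw [csqrt_I_neg h, csqrt_four_add_I_neg h]
    have he : -((aa (-s) : ℂ) * (1 - Complex.I)
          * ((aa (-s) : ℂ) * (1 - Complex.I) + ((xx (-s) : ℂ) - (yy (-s) : ℂ) * Complex.I))) / 2
        = ((-(aa (-s) * (xx (-s) - yy (-s))) / 2 : ℝ) : ℂ)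
          + (((aa (-s) * (2 * aa (-s) + xx (-s) + yy (-s))) / 2 : ℝ) : ℂ) * Complex.I := by
      push_cast
      ring_nf
      rw [Complex.I_sq]
      ring
    rw [he]
    simp [Complex.add_re, Complex.ofReal_re, Complex.mul_re]
    have h1 := aa_nonneg (-s)
    have h2 := yy_le_xx (-s)
    nlinarith
  · rw [csqrt_I_pos h, csqrt_four_add_I_pos h]
    have he : -((aa s : ℂ) * (1 + Complex.I)
          * ((aa s : ℂ) * (1 + Complex.I) + ((xx s : ℂ) + (yy s : ℂ) * Complex.I))) / 2
        = ((-(aa s * (xx s - yy s)) / 2 : ℝ) : ℂ)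
          + ((-(aa s * (2 * aa s + xx s + yy s)) / 2 : ℝ) : ℂ) * Complex.I := by
      push_cast
      ring_nf
      rw [Complex.I_sq]
      ring
    rw [he]
    simp [Complex.add_re, Complex.ofReal_re, Complex.mul_re]
    have h1 := aa_nonneg s
    have h2 := yy_le_xx s
    nlinarith

lemma chi_eq (h ν t : ℝ) : chi h ν t = Complex.I * (((t * h^2 / ν : ℝ)) : ℂ) := by
  unfold chi; push_cast; ring

set_option maxHeartbeats 1000000


/-- For `0 < θ ≤ 1` and `√(ν_o/ν_a) ≤ h_o/h_a`, the low-frequency limit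
`ξ₀ = (1/θ)·|1 − θ + ε·√(ν_a/ν_o)|` is an upper bound of the convergence factor:
`ξ(t) ≤ ξ₀` for every real `t ≠ 0`. -/
theorem xi_bounded_by_low_frequency_limit
    (νa νo ha ho αc ε θ : ℝ)
    (hνa : 0 < νa) (hνo : 0 < νo) (hha : 0 < ha) (hho : 0 < ho)
    (hαc : 0 < αc) (hε : 0 < ε)
    (hθpos : 0 < θ) (hθle : θ ≤ 1)
    (hgrid : Real.sqrt (νo / νa) ≤ ho / ha) :
    ∀ t : ℝ, t ≠ 0 →
      xi νa νo ha ho αc ε θ t ≤ (1 / θ) * |1 - θ + ε * Real.sqrt (νa / νo)| := by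
  intro t ht
  set sa : ℝ := t * ha^2 / νa with hsa_def
  set so : ℝ := t * ho^2 / νo with hso_def
  have hsa : sa ≠ 0 := by
    simp only [hsa_def]; positivity
  have hso : so ≠ 0 := by
    simp only [hso_def]; positivity
  set ua : ℝ := |sa| with hua_def
  set uo : ℝ := |so| with huo_def
  have hua : ua = |t| * (ha^2/νa) := by
    rw [hua_def, hsa_def, mul_div_assoc, abs_mul,
      abs_of_pos (show (0:ℝ) < ha^2/νa by positivity)]
  have huo : uo = |t| * (ho^2/νo) := by
    rw [huo_def, hso_def, mul_div_assoc, abs_mul,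
      abs_of_pos (show (0:ℝ) < ho^2/νo by positivity)]
  have htpos : 0 < |t| := abs_pos.mpr ht
  have huapos : 0 < ua := abs_pos.mpr hsa
  have huopos : 0 < uo := abs_pos.mpr hso
  -- grid condition gives ua ≤ uo
  have hgrid2 : νo / νa ≤ (ho/ha)^2 := by
    have h1 := Real.sq_sqrt (le_of_lt (by positivity : (0:ℝ) < νo/νa))
    nlinarith [Real.sqrt_nonneg (νo/νa)]
  have huale : ua ≤ uo := by
    rw [hua, huo]
    have h3 : νo/νa ≤ ho^2/ha^2 := by rw [div_pow] at hgrid2; exact hgrid2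
    rw [div_le_div_iff₀ hνa (by positivity)] at h3
    have h4 : ha^2/νa ≤ ho^2/νo := by
      rw [div_le_div_iff₀ hνa hνo]
      nlinarith
    nlinarith
  -- abbreviations
  set A : ℝ := Real.sqrt ua with hA
  set B : ℝ := Real.sqrt uo with hB
  set Ca : ℝ := Real.sqrt (F2 ua) with hCa
  set Co : ℝ := Real.sqrt (F2 uo) with hCo
  set k : ℝ := Real.sqrt (νa/νo) with hk
  have hApos : 0 < A := Real.sqrt_pos.mpr huapos
  have hBpos : 0 < B := Real.sqrt_pos.mpr huopos
  have hCapos : 0 < Ca := Real.sqrt_pos.mpr (F2_pos _)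
  have hCopos : 0 < Co := Real.sqrt_pos.mpr (F2_pos _)
  have hkpos : 0 < k := Real.sqrt_pos.mpr (by positivity)
  have hCle : Ca ≤ Co := Real.sqrt_le_sqrt (F2_mono huapos.le huale)
  -- key scaling identity: ha * B = k * (ho * A)
  have hkey : ha * B = k * (ho * A) := by
    have e1 : ha * B = Real.sqrt (ha^2 * uo) := by
      rw [hB, Real.sqrt_mul (by positivity), Real.sqrt_sq hha.le]
    have e2 : k * (ho * A) = Real.sqrt ((νa/νo) * (ho^2 * ua)) := by
      rw [hk, hA, Real.sqrt_mul (by positivity), Real.sqrt_mul (by positivity),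
        Real.sqrt_sq hho.le]
    rw [e1, e2]
    congr 1
    rw [hua, huo]
    field_simp
  -- convergence factor pieces
  unfold xi
  rw [chi_eq ha νa t, chi_eq ho νo t, norm_div]
  set La : ℂ := lamM (Complex.I * ((sa : ℝ) : ℂ)) with hLa
  set Lo : ℂ := lamM (Complex.I * ((so : ℝ) : ℂ)) with hLo
  have hAa : ‖La‖ = 2 * A / Ca := by rw [hLa, abs_lamM hsa]
  have hAo : ‖Lo‖ = 2 * B / Co := by rw [hLo, abs_lamM hso]
  -- numerator bound
  have hNum : ‖(1 - (θ : ℂ)) + (ε : ℂ) * (ha : ℂ) * Lo / ((ho : ℂ) * La)‖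
      ≤ (1 - θ) + ε * k := by
    refine (norm_add_le _ _).trans ?_
    have e1 : ‖1 - (θ:ℂ)‖ = 1 - θ := by
      rw [show (1 - (θ:ℂ)) = (((1-θ : ℝ)) : ℂ) by push_cast; ring,
        Complex.norm_real, Real.norm_eq_abs, _root_.abs_of_nonneg (by linarith : (0:ℝ) ≤ 1 - θ)]
    have e2 : ‖(ε : ℂ) * (ha : ℂ) * Lo / ((ho : ℂ) * La)‖
        = ε * ha * (2*B/Co) / (ho * (2*A/Ca)) := by
      rw [norm_div, norm_mul, norm_mul, norm_mul, Complex.norm_real, Complex.norm_real,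
        Complex.norm_real, Real.norm_eq_abs, Real.norm_eq_abs, Real.norm_eq_abs, hAa, hAo, abs_of_pos hε, abs_of_pos hha, abs_of_pos hho]
    rw [e1, e2]
    have hfrac : ε * ha * (2*B/Co) / (ho * (2*A/Ca)) ≤ ε * k := by
      rw [div_le_iff₀ (by positivity)]
      have expand : ε * k * (ho * (2*A/Ca)) = (ε * (k * (ho * A))) * (2/Ca) := by ring
      rw [expand, ← hkey]
      have h2 : 2/Co ≤ 2/Ca := by gcongr
      calc ε * ha * (2*B/Co) = (ε * (ha * B)) * (2/Co) := by ring
        _ ≤ (ε * (ha * B)) * (2/Ca) :=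
            mul_le_mul_of_nonneg_left h2 (by positivity)
    linarith
  -- denominator bound
  have hDen : θ ≤ ‖(νa : ℂ) * (Complex.I * ((sa : ℝ):ℂ))
      / ((αc : ℂ) * (ha : ℂ) * La) - (θ : ℂ)‖ := by
    have hre0 : ((Complex.I * ((sa : ℝ):ℂ)) / La).re ≤ 0 := re_chi_div_lam hsa
    have hsplit : (νa : ℂ) * (Complex.I * ((sa : ℝ):ℂ)) / ((αc : ℂ) * (ha : ℂ) * La)
        = (((νa / (αc * ha) : ℝ)) : ℂ) * ((Complex.I * ((sa : ℝ):ℂ)) / La) := by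
      have hLne : La ≠ 0 := hLa ▸ lamM_ne_zero hsa
      push_cast
      field_simp
    have hre : ((νa : ℂ) * (Complex.I * ((sa : ℝ):ℂ)) / ((αc : ℂ) * (ha : ℂ) * La)).re ≤ 0 := by
      rw [hsplit, Complex.mul_re, Complex.ofReal_re, Complex.ofReal_im]
      simp only [zero_mul, sub_zero]
      have h0 : (0:ℝ) ≤ νa / (αc * ha) := by positivity
      exact mul_nonpos_of_nonneg_of_nonpos h0 hre0
    set D : ℂ := (νa : ℂ) * (Complex.I * ((sa : ℝ):ℂ)) / ((αc : ℂ) * (ha : ℂ) * La) - (θ : ℂ)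
      with hD
    have hDre : D.re ≤ -θ := by
      rw [hD, Complex.sub_re, Complex.ofReal_re]
      linarith
    calc θ ≤ -D.re := by linarith
      _ ≤ |D.re| := neg_le_abs _
      _ ≤ ‖D‖ := Complex.abs_re_le_norm D
  -- conclude
  have h5 : (0:ℝ) ≤ ε * k := by positivity
  have hrhs : (1 / θ) * |1 - θ + ε * k| = ((1 - θ) + ε * k) / θ := by
    rw [_root_.abs_of_nonneg (by linarith : (0:ℝ) ≤ 1 - θ + ε * k)]
    ring
  rw [hk] at hrhs
  rw [hrhs]
  have hNum0 : (0:ℝ) ≤ (1 - θ) + ε * k := by linarith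
  exact div_le_div₀ hNum0 hNum hθpos hDen
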